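/- Under the attributed Erdős–Rényi graph pair model G(n,p,s_u; m,q,s_a) with q = o(1), s_a = Θ(1), and m q s_a² ≥ 2 log n / (τ log(1/q)) for a constant τ > 0, let S2 = {(i,j) : C_ij > z} with z = (1+τ) m q s_a². Then with probability tending to 1 as n → ∞, every pair (i,j) ∈ S2 satisfies j = Π*(i); in particular, with probability tending to 1 no two distinct pairs in S2 share a coordinate. -/

import Mathlib

open MeasureTheory ProbabilityTheory Filter Finset

noncomputable section

namespace AttrAlign

/-- The Bernoulli measure on `Bool` with success probability `r` (clamped to `[0,1]`). -/
def bern (r : ℝ) : Measure Bool :=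
  (PMF.bernoulli (min (Real.toNNReal r) 1) (min_le_right _ _)).toMeasure

/-- The uniform measure on a finite type (the zero measure if the type is empty). -/
def uniformMeasure (α : Type*) [Fintype α] [MeasurableSpace α] : Measure α := by
  classical
  exact if h : Nonempty α then (@PMF.uniformOfFintype α _ h).toMeasure else 0

instance permMeasurableSpace (n : ℕ) : MeasurableSpace (Equiv.Perm (Fin n)) := ⊤

/-- Sample space for the attributed Erdős–Rényi graph pair model `G(n,p,s_u; m,q,s_a)`:
base user–user edge indicators, base user–attribute edge indicators, the two subsampling
indicator families for `G₁`, the two subsampling indicator families for `G₂`, and the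
anonymizing permutation `Π*`.  Only the entries with `i < j` of the user–user indicator
matrices are used. -/
abbrev Config (n m : ℕ) :=
  (Fin n → Fin n → Bool) × (Fin n → Fin m → Bool) ×
    (Fin n → Fin n → Bool) × (Fin n → Fin m → Bool) ×
    (Fin n → Fin n → Bool) × (Fin n → Fin m → Bool) × Equiv.Perm (Fin n)

/-- i.i.d. `Bern(r)` measure on a `k × l` matrix of Booleans. -/
def edgeMeasure (k l : ℕ) (r : ℝ) : Measure (Fin k → Fin l → Bool) :=
  Measure.pi fun _ => Measure.pi fun _ => bern r

/-- The law of the attributed Erdős–Rényi graph pair model `G(n,p,s_u; m,q,s_a)`: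
all edge indicators are independent, base user–user edges are `Bern(p)`, base
user–attribute edges are `Bern(q)`, the user–user subsampling indicators are `Bern(s_u)`,
the user–attribute subsampling indicators are `Bern(s_a)`, and the permutation `Π*` is
uniform. -/
def attrMeasure (n m : ℕ) (p q su sa : ℝ) : Measure (Config n m) :=
  (edgeMeasure n n p).prod ((edgeMeasure n m q).prod ((edgeMeasure n n su).prod
    ((edgeMeasure n m sa).prod ((edgeMeasure n n su).prod
      ((edgeMeasure n m sa).prod (uniformMeasure (Equiv.Perm (Fin n))))))))

variable {n m : ℕ}

def uu0 (ω : Config n m) : Fin n → Fin n → Bool := ω.1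
def ua0 (ω : Config n m) : Fin n → Fin m → Bool := ω.2.1
def suG1 (ω : Config n m) : Fin n → Fin n → Bool := ω.2.2.1
def saG1 (ω : Config n m) : Fin n → Fin m → Bool := ω.2.2.2.1
def suG2 (ω : Config n m) : Fin n → Fin n → Bool := ω.2.2.2.2.1
def saG2 (ω : Config n m) : Fin n → Fin m → Bool := ω.2.2.2.2.2.1
/-- The true permutation `Π*`. -/
def pstar (ω : Config n m) : Equiv.Perm (Fin n) := ω.2.2.2.2.2.2

/-- Symmetrized edge indicator on unordered pairs of users (no self loops). -/
def symEdge {k : ℕ} (f : Fin k → Fin k → Bool) (i j : Fin k) : Bool :=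
  if i < j then f i j else if j < i then f j i else false

/-- Adjacency of users `i` and `j` in `G₁`. -/
def G1uu (ω : Config n m) (i j : Fin n) : Bool :=
  symEdge (fun a b => uu0 ω a b && suG1 ω a b) i j

/-- Adjacency of users `i` and `j` in `G₂`. -/
def G2uu (ω : Config n m) (i j : Fin n) : Bool :=
  symEdge (fun a b => uu0 ω a b && suG2 ω a b) i j

/-- Adjacency of users `i` and `j` in the anonymized graph `G₂'`, obtained by applying
`Π*` to the users of `G₂`. -/
def G2puu (ω : Config n m) (i j : Fin n) : Bool :=
  G2uu ω ((pstar ω).symm i) ((pstar ω).symm j)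

/-- Adjacency of user `i` and attribute `a` in `G₁`. -/
def G1ua (ω : Config n m) (i : Fin n) (a : Fin m) : Bool := ua0 ω i a && saG1 ω i a

/-- Adjacency of user `i` and attribute `a` in `G₂`. -/
def G2ua (ω : Config n m) (i : Fin n) (a : Fin m) : Bool := ua0 ω i a && saG2 ω i a

/-- Adjacency of user `j` and attribute `a` in the anonymized graph `G₂'`. -/
def G2pua (ω : Config n m) (j : Fin n) (a : Fin m) : Bool :=
  G2ua ω ((pstar ω).symm j) a

/-- `C i j`: the number of attributes adjacent to user `i` in `G₁` and to user `j` in `G₂'`. -/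
def CC (ω : Config n m) (i j : Fin n) : ℕ :=
  (univ.filter fun a : Fin m => G1ua ω i a = true ∧ G2pua ω j a = true).card

/-- The anchor set `{(i,j) : C_ij > x}`. -/
def anchors (x : ℝ) (ω : Config n m) : Finset (Fin n × Fin n) := by
  classical exact univ.filter fun ij : Fin n × Fin n => x < (CC ω ij.1 ij.2 : ℝ)

/-- No two distinct pairs of `S` share a coordinate. -/
def noConflict {k : ℕ} (S : Finset (Fin k × Fin k)) : Prop :=
  ∀ a ∈ S, ∀ b ∈ S, (a.1 = b.1 ∨ a.2 = b.2) → a = b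

/-- Users of `G₁` not matched by the anchor set `S`. -/
def unmatched1 (S : Finset (Fin n × Fin n)) : Finset (Fin n) := by
  classical exact univ.filter fun i : Fin n => ∀ j, (i, j) ∉ S

/-- Users of `G₂'` not matched by the anchor set `S`. -/
def unmatched2 (S : Finset (Fin n × Fin n)) : Finset (Fin n) := by
  classical exact univ.filter fun j : Fin n => ∀ i, (i, j) ∉ S

/-- `W i j`: the number of pairs `(k,l) ∈ S` with `k` adjacent to `i` in `G₁` and
`l` adjacent to `j` in `G₂'`. -/
def W (ω : Config n m) (S : Finset (Fin n × Fin n)) (i j : Fin n) : ℕ := by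
  classical
  exact (S.filter fun kl : Fin n × Fin n =>
    G1uu ω i kl.1 = true ∧ G2puu ω j kl.2 = true).card

end AttrAlign

/-! First moment method. A wrong pair `(i, j)` with `C_ij > z` yields distinct users `i` and
`k = Π*⁻¹(j)` of `G₁` and `G₂` with `t = ⌊z⌋ + 1` common attributes. Since `i ≠ k`, the `4t`
edge indicators involved are independent, so a fixed `t`-set of attributes is common with
probability `(q² s_a²)^t`. Union bounds over the `n²` user pairs and the `C(m, t)` attribute
sets, with `C(m, t) x^t ≤ (e m x / t)^t` and `m q² s_a² ≤ q t`, bound the failure probability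
by `n² (e q)^t`. Once `log (1/q) ≥ 2 (1 + τ)`, the bound
`t > z ≥ 2 (1 + τ) log n / (τ log (1/q))` makes this at most `n^(-1/τ) → 0`.
A set of pairs all of the form `(i, Π*(i))` has no conflicts. -/

theorem tendsto_measure_of_tendsto_measure_compl {ι : Type*} {l : Filter ι} {α : ι → Type*}
    [∀ i, MeasurableSpace (α i)] (μ : ∀ i, Measure (α i))
    [∀ i, IsProbabilityMeasure (μ i)]
    {s : ∀ i, Set (α i)} (hs : ∀ i, MeasurableSet (s i))
    (h : Tendsto (fun i => μ i (s i)ᶜ) l (nhds 0)) :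
    Tendsto (fun i => μ i (s i)) l (nhds 1) := by
  have hsub : ∀ i, μ i (s i) = 1 - μ i (s i)ᶜ := fun i =>
    ENNReal.eq_sub_of_add_eq (measure_ne_top _ _) (prob_add_prob_compl (hs i))
  simpa [hsub] using ENNReal.Tendsto.sub tendsto_const_nhds h (Or.inl ENNReal.one_ne_top)

theorem measure_le_card_filter_le_choose_mul_pow {Ω ι : Type*} [MeasurableSpace Ω] [Fintype ι]
    (μ : Measure Ω) (P : ι → Ω → Prop) [∀ a ω, Decidable (P a ω)] {c : ENNReal}
    (hP : ∀ T : Finset ι, μ {ω | ∀ a ∈ T, P a ω} = c ^ T.card) (t : ℕ) :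
    μ {ω | t ≤ (univ.filter fun a => P a ω).card} ≤ (Fintype.card ι).choose t * c ^ t := by
  have hcover : {ω | t ≤ (univ.filter fun a => P a ω).card} ⊆
      ⋃ T ∈ powersetCard t (univ : Finset ι), {ω | ∀ a ∈ T, P a ω} := by
    intro ω hω
    obtain ⟨T, hT, rfl⟩ := exists_subset_card_eq hω
    exact Set.mem_biUnion (mem_powersetCard.mpr ⟨subset_univ T, rfl⟩)
      fun a ha => (mem_filter.mp (hT ha)).2
  calc μ {ω | t ≤ (univ.filter fun a => P a ω).card}
      ≤ ∑ T ∈ powersetCard t (univ : Finset ι), μ {ω | ∀ a ∈ T, P a ω} :=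
        (measure_mono hcover).trans (measure_biUnion_finset_le _ _)
    _ = (Fintype.card ι).choose t * c ^ t := by
        rw [sum_congr rfl fun T hT => (hP T).trans (by rw [(mem_powersetCard.mp hT).2]),
          sum_const, card_powersetCard, card_univ, nsmul_eq_mul]

theorem measure_exists_ne_le {Ω ι : Type*} [MeasurableSpace Ω] [Fintype ι] (μ : Measure Ω)
    (P : ι → ι → Ω → Prop) {b : ENNReal}
    (hP : ∀ i k, i ≠ k → μ {ω | P i k ω} ≤ b) :
    μ {ω | ∃ i k, i ≠ k ∧ P i k ω} ≤ (Fintype.card ι : ENNReal) ^ 2 * b := by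
  have hne : ∀ i k, μ {ω | i ≠ k ∧ P i k ω} ≤ b := fun i k => by
    by_cases hik : i = k
    · simp [hik]
    · exact (measure_mono fun ω hω => hω.2).trans (hP i k hik)
  calc μ {ω | ∃ i k, i ≠ k ∧ P i k ω}
      = μ (⋃ i, ⋃ k, {ω | i ≠ k ∧ P i k ω}) := by
        congr 1; ext; simp
    _ ≤ ∑ i, ∑ k, μ {ω | i ≠ k ∧ P i k ω} :=
        (measure_iUnion_fintype_le _ _).trans (sum_le_sum fun i _ => measure_iUnion_fintype_le _ _)
    _ ≤ ∑ _i : ι, ∑ _k : ι, b := sum_le_sum fun i _ => sum_le_sum fun k _ => hne i k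
    _ = (Fintype.card ι : ENNReal) ^ 2 * b := by simp [sq, mul_assoc]

theorem choose_mul_pow_le_exp_mul_pow (M t : ℕ) {x : ℝ} (hx : 0 ≤ x) :
    (M.choose t : ℝ) * x ^ t ≤ (Real.exp 1 * (M * x / t)) ^ t := by
  rcases Nat.eq_zero_or_pos t with rfl | ht
  · simp
  have htpos : (0 : ℝ) < t := by exact_mod_cast ht
  have hfact : (t : ℝ) ^ t / t.factorial ≤ Real.exp t :=
    Real.pow_div_factorial_le_exp _ htpos.le t
  calc (M.choose t : ℝ) * x ^ t ≤ (M : ℝ) ^ t / t.factorial * x ^ t :=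
        mul_le_mul_of_nonneg_right (Nat.choose_le_pow_div t M) (by positivity)
    _ = (M * x / t) ^ t * ((t : ℝ) ^ t / t.factorial) := by
        rw [← mul_div_assoc, ← mul_pow, div_mul_cancel₀ _ htpos.ne', div_mul_eq_mul_div,
          mul_pow]
    _ ≤ (M * x / t) ^ t * Real.exp t := mul_le_mul_of_nonneg_left hfact (by positivity)
    _ = (Real.exp 1 * (M * x / t)) ^ t := by
        rw [mul_pow, ← Real.exp_nat_mul, mul_one, mul_comm]

namespace AttrAlign

variable {n m : ℕ}

instance (r : ℝ) : IsProbabilityMeasure (bern r) := by unfold bern; infer_instance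

instance (k l : ℕ) (r : ℝ) : IsProbabilityMeasure (edgeMeasure k l r) := by
  unfold edgeMeasure; infer_instance

instance (n : ℕ) : IsProbabilityMeasure (uniformMeasure (Equiv.Perm (Fin n))) := by
  rw [uniformMeasure, dif_pos ⟨Equiv.refl _⟩]; infer_instance

instance (n m : ℕ) (p q su sa : ℝ) : IsProbabilityMeasure (attrMeasure n m p q su sa) := by
  unfold attrMeasure; infer_instance

theorem bern_singleton_true {r : ℝ} (hr : r ≤ 1) : bern r {true} = ENNReal.ofReal r := by
  rw [bern, PMF.toMeasure_apply_singleton _ _ (measurableSet_singleton _), PMF.bernoulli_apply,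
    cond_true, min_eq_left (by exact_mod_cast Real.toNNReal_le_one.mpr hr)]
  rfl

theorem edgeMeasure_forall_true {k l : ℕ} {r : ℝ} (hr : r ≤ 1) (R : Finset (Fin k))
    (T : Finset (Fin l)) :
    edgeMeasure k l r {f | ∀ x ∈ R, ∀ a ∈ T, f x a = true}
      = ENNReal.ofReal r ^ (R.card * T.card) := by
  have hpi : {f : Fin k → Fin l → Bool | ∀ x ∈ R, ∀ a ∈ T, f x a = true}
      = (R : Set (Fin k)).pi fun _ => (T : Set (Fin l)).pi fun _ => {true} := by
    ext f; simp [Set.mem_pi]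
  rw [hpi, edgeMeasure]
  simp only [Measure.pi_pi_finset, bern_singleton_true hr, prod_const, ← pow_mul, mul_comm]

def commonCount (ω : Config n m) (i k : Fin n) : ℕ :=
  (univ.filter fun a : Fin m => G1ua ω i a = true ∧ G2ua ω k a = true).card

theorem CC_eq_commonCount (ω : Config n m) (i j : Fin n) :
    CC ω i j = commonCount ω i ((pstar ω).symm j) := rfl

theorem attrMeasure_forall_common {p q su sa : ℝ} (hq0 : 0 ≤ q) (hq1 : q ≤ 1)
    (hsa0 : 0 ≤ sa) (hsa1 : sa ≤ 1) {i k : Fin n} (hik : i ≠ k) (T : Finset (Fin m)) :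
    attrMeasure n m p q su sa {ω | ∀ a ∈ T, G1ua ω i a = true ∧ G2ua ω k a = true}
      = ENNReal.ofReal (q ^ 2 * sa ^ 2) ^ T.card := by
  have hprod : {ω : Config n m | ∀ a ∈ T, G1ua ω i a = true ∧ G2ua ω k a = true}
      = Set.univ ×ˢ ({f | ∀ x ∈ ({i, k} : Finset (Fin n)), ∀ a ∈ T, f x a = true} ×ˢ
          (Set.univ ×ˢ ({f | ∀ x ∈ ({i} : Finset (Fin n)), ∀ a ∈ T, f x a = true} ×ˢ
            (Set.univ ×ˢ ({f | ∀ x ∈ ({k} : Finset (Fin n)), ∀ a ∈ T, f x a = true} ×ˢ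
              Set.univ))))) := by
    ext ω
    simp only [G1ua, G2ua, ua0, saG1, saG2, Bool.and_eq_true, Set.mem_prod,
      Set.mem_univ, mem_insert, mem_singleton, forall_eq_or_imp, forall_eq, true_and, and_true]
    grind
  rw [hprod, attrMeasure]
  simp only [Measure.prod_prod, measure_univ, one_mul, mul_one,
    edgeMeasure_forall_true hq1, edgeMeasure_forall_true hsa1, card_pair hik, card_singleton]
  rw [ENNReal.ofReal_mul (by positivity), ENNReal.ofReal_pow hq0, ENNReal.ofReal_pow hsa0]
  ring

theorem attrMeasure_exists_commonCount_ge_le {p q su sa : ℝ} (hq0 : 0 ≤ q) (hq1 : q ≤ 1)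
    (hsa0 : 0 ≤ sa) (hsa1 : sa ≤ 1) (t : ℕ) :
    attrMeasure n m p q su sa {ω | ∃ i k, i ≠ k ∧ t ≤ commonCount ω i k}
      ≤ ENNReal.ofReal ((n : ℝ) ^ 2 * (m.choose t * (q ^ 2 * sa ^ 2) ^ t)) := by
  refine (measure_exists_ne_le _ _ fun i k hik =>
    measure_le_card_filter_le_choose_mul_pow _ _
      (attrMeasure_forall_common hq0 hq1 hsa0 hsa1 hik) t).trans (le_of_eq ?_)
  simp (disch := positivity) only [Fintype.card_fin, ENNReal.ofReal_mul, ENNReal.ofReal_pow,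
    ENNReal.ofReal_natCast]

theorem exists_commonCount_of_not_correct {z : ℝ} (hz : 0 ≤ z) {ω : Config n m}
    (h : ¬ ∀ i j : Fin n, z < (CC ω i j : ℝ) → j = pstar ω i) :
    ∃ i k, i ≠ k ∧ ⌊z⌋₊ + 1 ≤ commonCount ω i k := by
  simp only [not_forall] at h
  obtain ⟨i, j, hzC, hj⟩ := h
  refine ⟨i, (pstar ω).symm j, fun hi => hj (by rw [hi, Equiv.apply_symm_apply]), ?_⟩
  rw [← CC_eq_commonCount]
  exact (Nat.floor_lt hz).mpr hzC

theorem exp_one_mul_pow_le {τ q ℓ : ℝ} (hτ : 0 < τ) (hq0 : 0 < q)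
    (hq : q ≤ Real.exp (-(2 * (1 + τ)))) (hℓ : 0 ≤ ℓ) {t : ℕ}
    (ht : (1 + τ) * (2 * ℓ / (τ * Real.log (1 / q))) ≤ t) :
    (Real.exp 1 * q) ^ t ≤ Real.exp (-(2 + 1 / τ) * ℓ) := by
  have hL : 2 * (1 + τ) ≤ Real.log (1 / q) := by
    rw [one_div, Real.log_inv, le_neg]
    simpa using Real.log_le_log hq0 hq
  set L := Real.log (1 / q)
  have hL0 : 0 < L := by linarith
  have heq : Real.exp 1 * q = Real.exp (1 - L) := by
    rw [Real.exp_sub, Real.exp_log (by positivity), one_div, div_inv_eq_mul]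
  rw [heq, ← Real.exp_nat_mul, Real.exp_le_exp]
  have hkey : (2 + 1 / τ) * ℓ ≤ (1 + τ) * (2 * ℓ / (τ * L)) * (L - 1) := by
    have hdiff : (1 + τ) * (2 * ℓ / (τ * L)) * (L - 1) - (2 + 1 / τ) * ℓ
        = ℓ * (L - 2 * (1 + τ)) / (τ * L) := by
      field_simp
      ring
    have : 0 ≤ ℓ * (L - 2 * (1 + τ)) / (τ * L) := by
      have := sub_nonneg.mpr hL
      positivity
    linarith
  linarith [mul_le_mul_of_nonneg_right ht (by linarith : (0 : ℝ) ≤ L - 1)]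

theorem attrMeasure_not_correct_le {p q su sa τ : ℝ} (hτ : 0 < τ) (hq0 : 0 < q)
    (hq : q ≤ Real.exp (-(2 * (1 + τ)))) (hsa0 : 0 ≤ sa) (hsa1 : sa ≤ 1) (hn : 1 ≤ n)
    (hmean : 2 * Real.log n / (τ * Real.log (1 / q)) ≤ (m : ℝ) * q * sa ^ 2) :
    attrMeasure n m p q su sa {ω | ∀ i j : Fin n,
        (1 + τ) * ((m : ℝ) * q * sa ^ 2) < (CC ω i j : ℝ) → j = pstar ω i}ᶜ
      ≤ ENNReal.ofReal ((n : ℝ) ^ (-(1 / τ))) := by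
  set z := (1 + τ) * ((m : ℝ) * q * sa ^ 2)
  set t := ⌊z⌋₊ + 1
  have hz0 : 0 ≤ z := by positivity
  have hzt : z < t := by exact_mod_cast Nat.lt_floor_add_one z
  have hbase : (m : ℝ) * (q ^ 2 * sa ^ 2) / t ≤ q := by
    have hmz : (m : ℝ) * q * sa ^ 2 ≤ z := le_mul_of_one_le_left (by positivity) (by linarith)
    rw [div_le_iff₀ (hz0.trans_lt hzt)]
    calc (m : ℝ) * (q ^ 2 * sa ^ 2) = q * ((m : ℝ) * q * sa ^ 2) := by ring
      _ ≤ q * t := mul_le_mul_of_nonneg_left (hmz.trans hzt.le) hq0.le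
  have hchoose : (m.choose t : ℝ) * (q ^ 2 * sa ^ 2) ^ t ≤ (Real.exp 1 * q) ^ t :=
    (choose_mul_pow_le_exp_mul_pow m t (by positivity)).trans
      (pow_le_pow_left₀ (by positivity) (by gcongr) t)
  have hexp := exp_one_mul_pow_le hτ hq0 hq (Real.log_natCast_nonneg n)
    ((mul_le_mul_of_nonneg_left hmean (by positivity)).trans hzt.le)
  have hnpos : (0 : ℝ) < n := by exact_mod_cast hn
  calc _ ≤ attrMeasure n m p q su sa {ω | ∃ i k, i ≠ k ∧ t ≤ commonCount ω i k} :=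
        measure_mono fun ω => exists_commonCount_of_not_correct hz0
    _ ≤ ENNReal.ofReal ((n : ℝ) ^ 2 * (m.choose t * (q ^ 2 * sa ^ 2) ^ t)) :=
        attrMeasure_exists_commonCount_ge_le hq0.le
          (hq.trans (Real.exp_le_one_iff.mpr (by linarith))) hsa0 hsa1 t
    _ ≤ ENNReal.ofReal ((n : ℝ) ^ 2 * Real.exp (-(2 + 1 / τ) * Real.log n)) :=
        ENNReal.ofReal_le_ofReal (by gcongr; exact hchoose.trans hexp)
    _ = ENNReal.ofReal ((n : ℝ) ^ (-(1 / τ))) := by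
        rw [Real.rpow_def_of_pos hnpos, ← Real.exp_log (pow_pos hnpos 2), ← Real.exp_add,
          Real.log_pow]
        ring_nf

theorem noConflict_of_forall_mem_eq {k : ℕ} {S : Finset (Fin k × Fin k)}
    (σ : Equiv.Perm (Fin k)) (hS : ∀ x ∈ S, x.2 = σ x.1) : noConflict S := by
  rintro ⟨i, j⟩ hij ⟨i', j'⟩ hij' hshare
  have hj : j = σ i := hS _ hij
  have hj' : j' = σ i' := hS _ hij'
  rcases hshare with rfl | rfl
  · simp [hj, hj']
  · simp [hj, σ.injective (hj.symm.trans hj')]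

theorem noConflict_anchors_of_forall_eq_pstar {z : ℝ} {ω : Config n m}
    (h : ∀ i j : Fin n, z < (CC ω i j : ℝ) → j = pstar ω i) : noConflict (anchors z ω) :=
  noConflict_of_forall_mem_eq (pstar ω) fun x hx => h x.1 x.2 (by simpa [anchors] using hx)

end AttrAlign

open AttrAlign

theorem anchors_attrSparse_all_correct_general
    (p q su sa : ℕ → ℝ) (m : ℕ → ℕ) (τ : ℝ)
    (hq01 : ∀ n, 0 < q n ∧ q n < 1)
    (hsa01 : ∀ n, 0 < sa n ∧ sa n ≤ 1)
    (hq : Tendsto q atTop (nhds 0))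
    (hτ : 0 < τ)
    (hmean : ∀ n : ℕ,
      2 * Real.log n / (τ * Real.log (1 / q n)) ≤ (m n : ℝ) * q n * (sa n) ^ 2) :
    Tendsto (fun n =>
        attrMeasure n (m n) (p n) (q n) (su n) (sa n)
          {ω : Config n (m n) | ∀ i j : Fin n,
            (1 + τ) * ((m n : ℝ) * q n * (sa n) ^ 2) < (CC ω i j : ℝ) →
              j = pstar ω i})
      atTop (nhds 1) ∧
    Tendsto (fun n =>
        attrMeasure n (m n) (p n) (q n) (su n) (sa n)
          {ω : Config n (m n) |
            noConflict (anchors ((1 + τ) * ((m n : ℝ) * q n * (sa n) ^ 2)) ω)})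
      atTop (nhds 1) := by
  have hpow : Tendsto (fun n : ℕ => ENNReal.ofReal ((n : ℝ) ^ (-(1 / τ)))) atTop (nhds 0) := by
    simpa using ENNReal.tendsto_ofReal
      ((tendsto_rpow_neg_atTop (by positivity)).comp tendsto_natCast_atTop_atTop)
  have hbad := tendsto_of_tendsto_of_tendsto_of_le_of_le' tendsto_const_nhds hpow
    (Eventually.of_forall fun _ => zero_le) <| by
      filter_upwards [hq.eventually_le_const (Real.exp_pos (-(2 * (1 + τ)))),
        eventually_ge_atTop 1] with n hqn hn
      exact attrMeasure_not_correct_le (p := p n) (su := su n) hτ (hq01 n).1 hqn (hsa01 n).1.le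
        (hsa01 n).2 hn (hmean n)
  have hcorrect := tendsto_measure_of_tendsto_measure_compl _
    (fun _ => (Set.to_countable _).measurableSet) hbad
  refine ⟨hcorrect, tendsto_of_tendsto_of_tendsto_of_le_of_le hcorrect tendsto_const_nhds
    (fun _ => measure_mono fun _ => noConflict_anchors_of_forall_eq_pstar) fun _ => prob_le_one⟩

/-- Under the attributed Erdős–Rényi graph pair model with `q = o(1)`, `s_a = Θ(1)`
and `m q s_a² ≥ 2 log n / (τ log(1/q))` for a constant `τ > 0`, the anchor set
`S₂ = {(i,j) : C_ij > z}` with `z = (1+τ) m q s_a²` contains, with probability tending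
to `1`, only correct pairs `(i, Π*(i))`; in particular, with probability tending to `1`
no two distinct pairs in `S₂` share a coordinate. -/
theorem anchors_attrSparse_all_correct
    (p q su sa : ℕ → ℝ) (m : ℕ → ℕ) (τ : ℝ)
    (hp01 : ∀ n, 0 ≤ p n ∧ p n ≤ 1) (hq01 : ∀ n, 0 < q n ∧ q n < 1)
    (hsu01 : ∀ n, 0 ≤ su n ∧ su n ≤ 1) (hsa01 : ∀ n, 0 < sa n ∧ sa n ≤ 1)
    (hq : Tendsto q atTop (nhds 0))
    (hsa : ∃ c > 0, ∀ᶠ n : ℕ in atTop, c ≤ sa n)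
    (hτ : 0 < τ)
    (hmean : ∀ n : ℕ,
      2 * Real.log n / (τ * Real.log (1 / q n)) ≤ (m n : ℝ) * q n * (sa n) ^ 2) :
    Tendsto (fun n =>
        attrMeasure n (m n) (p n) (q n) (su n) (sa n)
          {ω : Config n (m n) | ∀ i j : Fin n,
            (1 + τ) * ((m n : ℝ) * q n * (sa n) ^ 2) < (CC ω i j : ℝ) →
              j = pstar ω i})
      atTop (nhds 1) ∧
    Tendsto (fun n =>
        attrMeasure n (m n) (p n) (q n) (su n) (sa n)
          {ω : Config n (m n) |
            noConflict (anchors ((1 + τ) * ((m n : ℝ) * q n * (sa n) ^ 2)) ω)})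
      atTop (nhds 1) :=
  anchors_attrSparse_all_correct_general p q su sa m τ hq01 hsa01 hq hτ hmean
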